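/- The distortion error of the two-point set {(1/6, 3/4), (5/6, 3/4)} equals 31/288, i.e., ∫ min_{c ∈ α} ‖x − c‖² dP(x) = 31/288 where α = {(1/6,3/4), (5/6,3/4)}. -/

import Mathlib

open MeasureTheory ProbabilityTheory
open scoped ENNReal

noncomputable section

abbrev E2 : Type := EuclideanSpace ℝ (Fin 2)

/-- The point (a,b) of the Euclidean plane. -/
def pt (a b : ℝ) : E2 := (WithLp.equiv 2 (Fin 2 → ℝ)).symm ![a, b]

/-- The four generating similarities S₁,…,S₄ (indexed 0,…,3) of the Sierpiński carpet. -/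
def S : Fin 4 → E2 → E2
  | 0 => fun x => pt (x 0 / 3) (x 1 / 3)
  | 1 => fun x => pt (x 0 / 3 + 2/3) (x 1 / 3)
  | 2 => fun x => pt (x 0 / 3) (x 1 / 3 + 2/3)
  | 3 => fun x => pt (x 0 / 3 + 2/3) (x 1 / 3 + 2/3)

/-- The self-affinity equation P = (1/8)P∘S₁⁻¹ + (1/8)P∘S₂⁻¹ + (3/8)P∘S₃⁻¹ + (3/8)P∘S₄⁻¹. -/
def carpetEq (P : Measure E2) : Prop :=
  P = (1/8 : ℝ≥0∞) • P.map (S 0) + (1/8 : ℝ≥0∞) • P.map (S 1)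
    + (3/8 : ℝ≥0∞) • P.map (S 2) + (3/8 : ℝ≥0∞) • P.map (S 3)

/-- The unit square [0,1]². -/
def unitSq : Set E2 := {x | ∀ i, x i ∈ Set.Icc (0:ℝ) 1}

/-- S_ω = S_{ω₁} ∘ ⋯ ∘ S_{ω_k} for a word ω. -/
def Sw (w : List (Fin 4)) : E2 → E2 := fun x => w.foldr S x

/-- The basic square J_ω = S_ω([0,1]²). -/
def Jw (w : List (Fin 4)) : Set E2 := Sw w '' unitSq

/-- The basic square J_i of the first level. -/
def Jset (i : Fin 4) : Set E2 := S i '' unitSq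

/-- The mass centroid (conditional expectation) of P on a set A. -/
def ctr (P : Measure E2) (A : Set E2) : E2 := (P A).toReal⁻¹ • ∫ x in A, x ∂P

/-- E(ω) : distortion error on J_ω about its centroid a(ω) = S_ω(1/2,3/4). -/
def Err (P : Measure E2) (w : List (Fin 4)) : ℝ :=
  ∫ x in Jw w, ‖x - Sw w (pt (1/2) (3/4))‖^2 ∂P

/-- E(ωi, ωj) : distortion error on J_{ωi} ∪ J_{ωj} about its centroid. -/
def Epair (P : Measure E2) (w : List (Fin 4)) (i j : Fin 4) : ℝ :=
  ∫ x in (Jw (w ++ [i]) ∪ Jw (w ++ [j])),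
    ‖x - ctr P (Jw (w ++ [i]) ∪ Jw (w ++ [j]))‖^2 ∂P

/-! Each `S k` is a `1/3`-contraction of the unit square into itself, so the distance to the
square contracts under every map and `P` is carried by the square. Testing the self-similarity
equation against `x i` and `x i ^ 2` gives linear equations for the first two moments of each
coordinate; `|x 0 - 1/2|` needs no equation, since on the square `|S k x 0 - 1/2|` is affine with
mean `1/3` for every `k`. The squared distance to the nearer of the two points is a quadratic
polynomial in the coordinates minus `(2/3) |x 0 - 1/2|`, so its integral is determined by these
moments. -/

open Set
open scoped NNReal

section SelfSimilar

variable {X ι : Type*} [MeasurableSpace X] [Fintype ι] {μ : Measure X} {f : ι → X → X}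
  {p : ι → ℝ≥0∞}

theorem measure_le_of_forall_preimage_subset (hμ : μ = ∑ i, p i • μ.map (f i))
    (hp : ∑ i, p i = 1) (hf : ∀ i, Measurable (f i)) {A B : Set X} (hA : MeasurableSet A)
    (hAB : ∀ i, f i ⁻¹' A ⊆ B) : μ A ≤ μ B :=
  calc μ A = ∑ i, p i * μ (f i ⁻¹' A) := by
        conv_lhs => rw [hμ]
        simp [Measure.map_apply (hf _) hA]
    _ ≤ ∑ i, p i * μ B := by
      gcongr with i
      exact hAB i
    _ = μ B := by rw [← Finset.sum_mul, hp, one_mul]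

theorem measure_setOf_lt_eq_zero_of_le_scaled [IsFiniteMeasure μ] {g : X → ℝ}
    (hg : Measurable g) {c : ℝ} (hc : 1 < c)
    (h : ∀ t > 0, μ {x | t < g x} ≤ μ {x | c * t < g x}) {t : ℝ} (ht : 0 < t) :
    μ {x | t < g x} = 0 := by
  have hiter : ∀ n : ℕ, μ {x | t < g x} ≤ μ {x | c ^ n * t < g x} := by
    intro n
    induction n with
    | zero => simp
    | succ n ih =>
      refine ih.trans ?_
      rw [pow_succ, mul_comm _ c, mul_assoc]
      exact h _ (by positivity)
  have hanti : Antitone fun n : ℕ => {x | c ^ n * t < g x} :=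
    fun m n hmn x (hx : c ^ n * t < g x) =>
      show c ^ m * t < g x from lt_of_le_of_lt (by gcongr; exact hc.le) hx
  have hempty : ⋂ n : ℕ, {x | c ^ n * t < g x} = ∅ := by
    refine eq_empty_of_forall_notMem fun x hx => ?_
    obtain ⟨n, hn⟩ := ((tendsto_pow_atTop_atTop_of_one_lt hc).atTop_mul_const ht
      |>.eventually_gt_atTop (g x)).exists
    exact (mem_iInter.mp hx n).not_gt hn
  have hlim := tendsto_measure_iInter_atTop (μ := μ)
    (fun n => (measurableSet_lt measurable_const hg).nullMeasurableSet) hanti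
    ⟨0, measure_ne_top μ _⟩
  rw [hempty, measure_empty] at hlim
  exact le_antisymm (ge_of_tendsto' hlim hiter) zero_le

theorem measure_setOf_pos_eq_zero_of_le_scaled [IsFiniteMeasure μ] {g : X → ℝ}
    (hg : Measurable g) {c : ℝ} (hc : 1 < c)
    (h : ∀ t > 0, μ {x | t < g x} ≤ μ {x | c * t < g x}) : μ {x | 0 < g x} = 0 := by
  have hunion : {x | 0 < g x} = ⋃ n : ℕ, {x | 1 / (n + 1 : ℝ) < g x} := by
    ext x
    simp only [mem_ofPred_eq, mem_iUnion]
    exact ⟨exists_nat_one_div_lt, fun ⟨n, hn⟩ => lt_trans (by positivity) hn⟩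
  rw [hunion]
  exact measure_iUnion_null fun n =>
    measure_setOf_lt_eq_zero_of_le_scaled hg hc h (by positivity)

theorem ae_mem_of_eq_sum_map [MetricSpace X] [BorelSpace X] [IsFiniteMeasure μ]
    (hμ : μ = ∑ i, p i • μ.map (f i)) (hp : ∑ i, p i = 1) {r : ℝ≥0} (hr0 : 0 < r)
    (hr1 : r < 1) (hf : ∀ i, LipschitzWith r (f i)) {K : Set X} (hK : IsClosed K) (hKne : K.Nonempty)
    (hfK : ∀ i, MapsTo (f i) K K) : ∀ᵐ x ∂μ, x ∈ K := by
  have hcontract : ∀ i x, Metric.infDist (f i x) K ≤ r * Metric.infDist x K := by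
    intro i x
    have : Nonempty K := hKne.to_subtype
    rw [Metric.infDist_eq_iInf (x := x), Real.mul_iInf_of_nonneg r.coe_nonneg]
    exact le_ciInf fun y => (Metric.infDist_le_dist_of_mem (hfK i y.2)).trans
      ((hf i).dist_le_mul x y)
  have hnull : μ {x | 0 < Metric.infDist x K} = 0 := by
    refine measure_setOf_pos_eq_zero_of_le_scaled (Metric.continuous_infDist_pt K).measurable
      (one_lt_inv_iff₀.mpr ⟨hr0, hr1⟩) fun t _ => ?_
    refine measure_le_of_forall_preimage_subset hμ hp (fun i => (hf i).continuous.measurable)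
      (measurableSet_lt measurable_const (Metric.continuous_infDist_pt K).measurable)
      fun i x hx => ?_
    have := hcontract i x
    simp only [mem_preimage, mem_ofPred_eq] at hx ⊢
    rw [inv_mul_eq_div, div_lt_iff₀ (by exact_mod_cast hr0)]
    exact hx.trans_le (this.trans_eq (mul_comm _ _))
  refine measure_mono_null (fun x hx => ?_) hnull
  exact lt_of_le_of_ne Metric.infDist_nonneg (Ne.symm ((hK.mem_iff_infDist_zero hKne).not.mp hx))

theorem integral_eq_sum_of_eq_sum_map {E : Type*} [NormedAddCommGroup E] [NormedSpace ℝ E]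
    (hμ : μ = ∑ i, p i • μ.map (f i)) (hf : ∀ i, Measurable (f i)) {g : X → E}
    (hg : StronglyMeasurable g) (hgi : Integrable g μ) :
    ∫ x, g x ∂μ = ∑ i, (p i).toReal • ∫ x, g (f i x) ∂μ := by
  rw [hμ] at hgi
  conv_lhs => rw [hμ]
  rw [integral_finsetSum_measure fun i _ =>
    (integrable_finsetSum_measure.mp hgi) i (Finset.mem_univ i)]
  refine Finset.sum_congr rfl fun i _ => ?_
  rw [integral_smul_measure, integral_map (hf i).aemeasurable hg.aestronglyMeasurable]

theorem integrable_of_ae_mem_isCompact [TopologicalSpace X] [T2Space X]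
    [OpensMeasurableSpace X] [IsFiniteMeasure μ] {E : Type*} [NormedAddCommGroup E] {K : Set X}
    (hK : IsCompact K)
    (hμK : ∀ᵐ x ∂μ, x ∈ K) {g : X → E} (hg : Continuous g) : Integrable g μ := by
  rw [← Measure.restrict_eq_self_of_ae_mem hμK]
  exact hg.continuousOn.integrableOn_compact hK

end SelfSimilar

@[simp] theorem pt_apply_zero (a b : ℝ) : pt a b 0 = a := rfl

@[simp] theorem pt_apply_one (a b : ℝ) : pt a b 1 = b := rfl

def carpetWeight : Fin 4 → ℝ≥0∞ := ![1/8, 1/8, 3/8, 3/8]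

theorem sum_carpetWeight : ∑ k, carpetWeight k = 1 := by
  simp only [carpetWeight, Fin.sum_univ_four, Matrix.cons_val]
  rw [ENNReal.div_add_div_same, ENNReal.div_add_div_same, ENNReal.div_add_div_same]
  norm_num
  exact ENNReal.div_self (by norm_num) (by norm_num)

theorem carpetEq.eq_sum_map {P : Measure E2} (hP : carpetEq P) :
    P = ∑ k, carpetWeight k • P.map (S k) := by
  rw [Fin.sum_univ_four]
  exact hP

theorem S_apply_coord (k : Fin 4) (x : E2) (i : Fin 2) : S k x i = x i / 3 + S k 0 i := by
  fin_cases k <;> fin_cases i <;> simp [S]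

theorem S_eq_smul_add (k : Fin 4) (x : E2) : S k x = (3 : ℝ)⁻¹ • x + S k 0 := by
  ext i
  rw [S_apply_coord]
  simp [div_eq_inv_mul]

theorem lipschitzWith_S (k : Fin 4) : LipschitzWith 3⁻¹ (S k) :=
  LipschitzWith.of_dist_le_mul fun x y => by
    rw [S_eq_smul_add k x, S_eq_smul_add k y, dist_add_right, dist_smul₀]
    norm_num

theorem S_zero_mem (k : Fin 4) (i : Fin 2) : S k 0 i = 0 ∨ S k 0 i = 2 / 3 := by
  fin_cases k <;> fin_cases i <;> simp [S]

theorem mapsTo_S_unitSq (k : Fin 4) : MapsTo (S k) unitSq unitSq := fun x hx i => by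
  rw [S_apply_coord]
  have := hx i
  rcases S_zero_mem k i with h | h <;> rw [h] <;> constructor <;> linarith [this.1, this.2]

theorem isCompact_unitSq : IsCompact unitSq := by
  have h : unitSq = WithLp.toLp 2 '' univ.pi fun _ : Fin 2 => Icc (0 : ℝ) 1 := by
    ext x
    exact ⟨fun hx => ⟨x.ofLp, fun i _ => hx i, rfl⟩,
      by rintro ⟨y, hy, rfl⟩ i; exact hy i trivial⟩
  rw [h]
  exact (isCompact_univ_pi fun _ => isCompact_Icc).image (PiLp.continuous_toLp 2 _)

section Moments

variable {P : Measure E2}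

theorem carpetEq.ae_mem_unitSq [IsFiniteMeasure P] (hP : carpetEq P) :
    ∀ᵐ x ∂P, x ∈ unitSq :=
  ae_mem_of_eq_sum_map hP.eq_sum_map sum_carpetWeight (by norm_num) (by norm_num)
    lipschitzWith_S isCompact_unitSq.isClosed ⟨0, fun _ => by simp⟩ mapsTo_S_unitSq

theorem carpetEq.integrable [IsFiniteMeasure P] (hP : carpetEq P) {g : E2 → ℝ}
    (hg : Continuous g) : Integrable g P :=
  integrable_of_ae_mem_isCompact isCompact_unitSq hP.ae_mem_unitSq hg

theorem carpetEq.integral_eq [IsFiniteMeasure P] (hP : carpetEq P) {g : E2 → ℝ}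
    (hg : Continuous g) :
    ∫ x, g x ∂P = 1/8 * ∫ x, g (S 0 x) ∂P + 1/8 * ∫ x, g (S 1 x) ∂P
      + 3/8 * ∫ x, g (S 2 x) ∂P + 3/8 * ∫ x, g (S 3 x) ∂P := by
  rw [integral_eq_sum_of_eq_sum_map hP.eq_sum_map
    (fun k => (lipschitzWith_S k).continuous.measurable) hg.stronglyMeasurable (hP.integrable hg),
    Fin.sum_univ_four]
  simp [carpetWeight, ENNReal.toReal_div]

variable [IsProbabilityMeasure P]

theorem carpetEq.integral_quadratic (hP : carpetEq P) (i : Fin 2) (a b c : ℝ) :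
    ∫ x, a * x i ^ 2 + b * x i + c ∂P = a * ∫ x, x i ^ 2 ∂P + b * ∫ x, x i ∂P + c := by
  rw [integral_add (hP.integrable (g := fun x => a * x i ^ 2 + b * x i) (by fun_prop))
    (integrable_const c),
    integral_add (hP.integrable (by fun_prop)) (hP.integrable (by fun_prop)),
    integral_const_mul, integral_const_mul, integral_const]
  simp

theorem carpetEq.integral_S_coord (hP : carpetEq P) (k : Fin 4) (i : Fin 2) :
    ∫ x, S k x i ∂P = (∫ x, x i ∂P) / 3 + S k 0 i :=
  calc ∫ x, S k x i ∂P = ∫ x, 0 * x i ^ 2 + 3⁻¹ * x i + S k 0 i ∂P := by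
        congr 1; ext x; rw [S_apply_coord]; ring
    _ = _ := by rw [hP.integral_quadratic]; ring

theorem carpetEq.integral_S_coord_sq (hP : carpetEq P) (k : Fin 4) (i : Fin 2) :
    ∫ x, S k x i ^ 2 ∂P
      = (∫ x, x i ^ 2 ∂P) / 9 + 2 / 3 * S k 0 i * ∫ x, x i ∂P + S k 0 i ^ 2 :=
  calc ∫ x, S k x i ^ 2 ∂P
        = ∫ x, 9⁻¹ * x i ^ 2 + 2 / 3 * S k 0 i * x i + S k 0 i ^ 2 ∂P := by
        congr 1; ext x; rw [S_apply_coord]; ring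
    _ = _ := by rw [hP.integral_quadratic]; ring

theorem carpetEq.integral_coord_zero (hP : carpetEq P) : ∫ x, x 0 ∂P = 1 / 2 := by
  have h := hP.integral_eq (g := fun x => x 0) (by fun_prop)
  simp only [hP.integral_S_coord] at h
  norm_num [S] at h
  linarith

theorem carpetEq.integral_coord_one (hP : carpetEq P) : ∫ x, x 1 ∂P = 3 / 4 := by
  have h := hP.integral_eq (g := fun x => x 1) (by fun_prop)
  simp only [hP.integral_S_coord] at h
  norm_num [S] at h
  linarith

theorem carpetEq.integral_coord_zero_sq (hP : carpetEq P) : ∫ x, x 0 ^ 2 ∂P = 3 / 8 := by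
  have h := hP.integral_eq (g := fun x => x 0 ^ 2) (by fun_prop)
  simp only [hP.integral_S_coord_sq, hP.integral_coord_zero] at h
  norm_num [S] at h
  linarith

theorem carpetEq.integral_coord_one_sq (hP : carpetEq P) : ∫ x, x 1 ^ 2 ∂P = 21 / 32 := by
  have h := hP.integral_eq (g := fun x => x 1 ^ 2) (by fun_prop)
  simp only [hP.integral_S_coord_sq, hP.integral_coord_one] at h
  norm_num [S] at h
  linarith

theorem carpetEq.integral_abs_S_coord_zero_sub_half (hP : carpetEq P) (k : Fin 4) :
    ∫ x, |S k x 0 - 1 / 2| ∂P = 1 / 3 := by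
  rcases S_zero_mem k 0 with hk | hk
  · calc ∫ x, |S k x 0 - 1 / 2| ∂P = ∫ x, 0 * x 0 ^ 2 + (-1 / 3) * x 0 + 1 / 2 ∂P := by
          refine integral_congr_ae (hP.ae_mem_unitSq.mono fun x hx => ?_)
          dsimp only
          rw [S_apply_coord, hk, abs_of_nonpos (by linarith [(hx 0).2])]
          ring
      _ = 1 / 3 := by rw [hP.integral_quadratic, hP.integral_coord_zero]; norm_num
  · calc ∫ x, |S k x 0 - 1 / 2| ∂P = ∫ x, 0 * x 0 ^ 2 + 1 / 3 * x 0 + 1 / 6 ∂P := by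
          refine integral_congr_ae (hP.ae_mem_unitSq.mono fun x hx => ?_)
          dsimp only
          rw [S_apply_coord, hk, abs_of_nonneg (by linarith [(hx 0).1])]
          ring
      _ = 1 / 3 := by rw [hP.integral_quadratic, hP.integral_coord_zero]; norm_num

theorem carpetEq.integral_abs_coord_zero_sub_half (hP : carpetEq P) :
    ∫ x, |x 0 - 1 / 2| ∂P = 1 / 3 := by
  rw [hP.integral_eq (g := fun x => |x 0 - 1 / 2|) (by fun_prop)]
  simp only [hP.integral_abs_S_coord_zero_sub_half]
  norm_num

end Moments

-- The coefficients `1 * ...` match the shape of `carpetEq.integral_quadratic`.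
theorem min_sq_norm_sub_eq (x : E2) :
    min (‖x - pt (1/6) (3/4)‖^2) (‖x - pt (5/6) (3/4)‖^2)
      = (1 * x 0 ^ 2 + -1 * x 0 + 13 / 36) + (1 * x 1 ^ 2 + -3 / 2 * x 1 + 9 / 16)
        - 2 / 3 * |x 0 - 1 / 2| := by
  simp only [EuclideanSpace.norm_sq_eq, Fin.sum_univ_two, Real.norm_eq_abs, sq_abs,
    PiLp.sub_apply]
  simp only [pt_apply_zero, pt_apply_one]
  rcases le_total (x 0) (1 / 2) with h | h
  · rw [min_eq_left (by nlinarith), abs_of_nonpos (by linarith)]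
    ring
  · rw [min_eq_right (by nlinarith), abs_of_nonneg (by linarith)]
    ring

theorem distortion_two_points (P : Measure E2) [IsProbabilityMeasure P] (hP : carpetEq P) :
    ∫ x : E2, min (‖x - pt (1/6) (3/4)‖^2) (‖x - pt (5/6) (3/4)‖^2) ∂P = 31/288 := by
  simp_rw [min_sq_norm_sub_eq]
  rw [integral_sub (hP.integrable (g := fun x => (1 * x 0 ^ 2 + -1 * x 0 + 13 / 36)
      + (1 * x 1 ^ 2 + -3 / 2 * x 1 + 9 / 16)) (by fun_prop)) (hP.integrable (by fun_prop)),
    integral_add (hP.integrable (by fun_prop)) (hP.integrable (by fun_prop)),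
    hP.integral_quadratic, hP.integral_quadratic, integral_const_mul,
    hP.integral_abs_coord_zero_sub_half, hP.integral_coord_zero, hP.integral_coord_one,
    hP.integral_coord_zero_sq, hP.integral_coord_one_sq]
  norm_num
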